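/- Let (V,E) be a finite digraph, μ₁, μ₂ probability measures on V, and Q an acyclic flow on (V,E) with div Q = μ₁ − μ₂. Set V₋ = {x : μ₁(x) > μ₂(x)} and V₊ = {x : μ₂(x) > μ₁(x)}. Then Q admits a finite decomposition Q = ∑_n q_n Q_{γ_n} (finite self-avoiding directed paths γ_n, weights q_n ≥ 0) such that for every subset S ⊆ V, ∑_{n : γ_n ⊆ S} q_n ≤ min{ ∑_{x ∈ S∩V₋}(μ₁(x) − μ₂(x)), ∑_{x ∈ S∩V₊}(μ₂(x) − μ₁(x)) }, and moreover ∑_n q_n = (1/2) ∑_{x∈V} |μ₁(x) − μ₂(x)|. -/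

import Mathlib

open scoped BigOperators

variable {V : Type*}

/-- A directed path in the digraph `(V, E)`: a nonempty list of vertices whose
consecutive pairs are directed edges. -/
def IsDipath (E : Set (V × V)) (l : List V) : Prop :=
  l ≠ [] ∧ l.Chain' (fun a b => (a, b) ∈ E)

/-- The list of directed edges of a path. -/
def pathEdges (l : List V) : List (V × V) := l.zip l.tail

/-- The unit flow `Q_γ` along a path: `1` on the edges of the path and `0` elsewhere. -/
noncomputable def pathFlow (l : List V) : V × V → ℝ :=
  Set.indicator {e | e ∈ pathEdges l} 1

/-- A flow on the digraph `(V, E)`: nonnegative and supported on `E`. -/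
def IsFlow (E : Set (V × V)) (Q : V × V → ℝ) : Prop :=
  (∀ e, 0 ≤ Q e) ∧ ∀ e, e ∉ E → Q e = 0

/-- The divergence of a flow at a vertex. -/
noncomputable def divergence (Q : V × V → ℝ) (x : V) : ℝ :=
  (∑' y, Q (x, y)) - ∑' y, Q (y, x)

/-- A relation is acyclic if it has no directed cycles. -/
def AcyclicRel (r : V → V → Prop) : Prop := ∀ x, ¬ Relation.TransGen r x x

/-- The edge relation of a digraph. -/
def edgeRel (E : Set (V × V)) : V → V → Prop := fun a b => (a, b) ∈ E

/-- The partial order induced by an acyclic digraph: `x ≤ y` iff `x = y` or there is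
a directed path from `x` to `y`. -/
def inducedLE (E : Set (V × V)) : V → V → Prop :=
  Relation.ReflTransGen (edgeRel E)

/-- A finitely decomposable flow: a pointwise sum `∑ₙ qₙ Q_{γₙ}` over finite
self-avoiding directed paths with summable nonnegative weights. -/
def FinDecomposable (E : Set (V × V)) (Q : V × V → ℝ) : Prop :=
  ∃ (γ : ℕ → List V) (q : ℕ → ℝ),
    (∀ n, IsDipath E (γ n)) ∧ (∀ n, (γ n).Nodup) ∧ (∀ n, 0 ≤ q n) ∧ Summable q ∧
    ∀ e, Q e = ∑' n, q n * pathFlow (γ n) e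

/-- A probability measure on a countable set, as a nonnegative function of total sum `1`. -/
def IsProb (μ : V → ℝ) : Prop := (∀ x, 0 ≤ μ x) ∧ HasSum μ 1

/-- A coupling of `μ₁` and `μ₂`: a probability on `V × V` with the given marginals. -/
def IsCoupling (μ₁ μ₂ : V → ℝ) (ρ : V × V → ℝ) : Prop :=
  (∀ p, 0 ≤ ρ p) ∧ (∀ x, HasSum (fun y => ρ (x, y)) (μ₁ x)) ∧
    ∀ y, HasSum (fun x => ρ (x, y)) (μ₂ y)

/-- Stochastic domination: `∑ f μ₁ ≤ ∑ f μ₂` for every bounded increasing `f`. -/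
def StochDom (le : V → V → Prop) (μ₁ μ₂ : V → ℝ) : Prop :=
  ∀ f : V → ℝ, (∃ C, ∀ x, |f x| ≤ C) → (∀ x y, le x y → f x ≤ f y) →
    ∑' x, f x * μ₁ x ≤ ∑' x, f x * μ₂ x

/-- Finite-case divergence. -/
noncomputable def divergenceF [Fintype V] (Q : V × V → ℝ) (x : V) : ℝ :=
  (∑ y, Q (x, y)) - ∑ y, Q (y, x)

/-- Probability measure on a finite set. -/
def IsProbF [Fintype V] (μ : V → ℝ) : Prop := (∀ x, 0 ≤ μ x) ∧ ∑ x, μ x = 1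

/-- Coupling on a finite set. -/
def IsCouplingF [Fintype V] (μ₁ μ₂ : V → ℝ) (ρ : V × V → ℝ) : Prop :=
  (∀ p, 0 ≤ ρ p) ∧ (∀ x, ∑ y, ρ (x, y) = μ₁ x) ∧ ∀ y, ∑ x, ρ (x, y) = μ₂ y

/-- Stochastic domination on a finite set. -/
def StochDomF [Fintype V] (le : V → V → Prop) (μ₁ μ₂ : V → ℝ) : Prop :=
  ∀ f : V → ℝ, (∀ x y, le x y → f x ≤ f y) → ∑ x, f x * μ₁ x ≤ ∑ x, f x * μ₂ x

/-- The cost of a path: the sum of the weights of its edges. -/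
noncomputable def pathCost (w : V × V → ℝ) (l : List V) : ℝ := ((pathEdges l).map w).sum

/-- The geodesic cost associated to a weight function on a digraph. -/
noncomputable def geoCost (E : Set (V × V)) (w : V × V → ℝ) (x y : V) : ℝ :=
  sInf {r | ∃ l, IsDipath E l ∧ l.head? = some x ∧ l.getLast? = some y ∧ pathCost w l = r}

/-!
Peel off paths greedily. From a vertex `x` of positive divergence, follow edges carrying flow until
a vertex without outgoing flow is reached; by acyclicity this is a self-avoiding path, and it ends
at a vertex `y` of negative divergence. Subtract the largest multiple of its unit flow that keeps
the flow nonnegative and does not overshoot the divergence at `x` or `y`: this kills an edge or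
the divergence at an endpoint, so the process terminates. The weights of the paths starting
(ending) at `x` then add up to `(μ₁ - μ₂)⁺ x` (resp. `(μ₁ - μ₂)⁻ x`). A path inside `S` starts and
ends in `S`, which gives both bounds, and the total weight is `∑ (μ₁ - μ₂)⁺ = ½ ∑ |μ₁ - μ₂|`.
-/

open Finset Relation

section Paths

@[simp]
lemma pathEdges_cons_cons (a b : V) (l : List V) :
    pathEdges (a :: b :: l) = (a, b) :: pathEdges (b :: l) := rfl

lemma mem_of_mem_pathEdges {l : List V} {e : V × V} (he : e ∈ pathEdges l) :
    e.1 ∈ l ∧ e.2 ∈ l :=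
  have h := List.of_mem_zip he
  ⟨h.1, List.mem_of_mem_tail h.2⟩

lemma List.IsChain.rel_of_mem_pathEdges {r : V → V → Prop} {l : List V} (hl : l.IsChain r)
    {e : V × V} (he : e ∈ pathEdges l) : r e.1 e.2 := by
  induction hl with
  | nil | singleton => simp [pathEdges] at he
  | cons_cons hab _ ih =>
    rcases List.mem_cons.1 he with rfl | he
    exacts [hab, ih he]

lemma pathEdges_ne_nil {l : List V} {x y : V} (hx : l.head? = some x) (hy : l.getLast? = some y)
    (hxy : x ≠ y) : pathEdges l ≠ [] := by
  match l, hx, hy with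
  | [_], hx, hy => simp_all
  | a :: b :: t, _, _ => simp

open Classical in
lemma pathFlow_apply (l : List V) (e : V × V) :
    pathFlow l e = if e ∈ pathEdges l then 1 else 0 := by
  simp [pathFlow, Set.indicator_apply]

lemma pathFlow_nonneg (l : List V) (e : V × V) : 0 ≤ pathFlow l e :=
  Set.indicator_nonneg (fun _ _ => zero_le_one) e

end Paths

section Divergence

variable [Fintype V]

lemma sum_divergenceF (Q : V × V → ℝ) : ∑ x, divergenceF Q x = 0 := by
  simp only [divergenceF, sum_sub_distrib, sub_eq_zero]
  exact sum_comm

@[simp]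
lemma divergenceF_add (P Q : V × V → ℝ) (x : V) :
    divergenceF (P + Q) x = divergenceF P x + divergenceF Q x := by
  simp only [divergenceF, Pi.add_apply, sum_add_distrib]; ring

@[simp]
lemma divergenceF_sub (P Q : V × V → ℝ) (x : V) :
    divergenceF (P - Q) x = divergenceF P x - divergenceF Q x := by
  simp only [divergenceF, Pi.sub_apply, sum_sub_distrib]; ring

@[simp]
lemma divergenceF_smul (c : ℝ) (Q : V × V → ℝ) (x : V) :
    divergenceF (c • Q) x = c * divergenceF Q x := by
  simp only [divergenceF, Pi.smul_apply, smul_eq_mul, ← mul_sum]; ring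

lemma divergenceF_single [DecidableEq V] (a b x : V) :
    divergenceF (Pi.single (a, b) 1) x = (if a = x then 1 else 0) - if b = x then 1 else 0 := by
  simp only [divergenceF, Pi.single_apply, Prod.mk.injEq, ite_and]
  simp [sum_ite_irrel, eq_comm]

lemma divergenceF_pathFlow [DecidableEq V] {l : List V} (hl : l.Nodup) (x : V) :
    divergenceF (pathFlow l) x =
      (if l.head? = some x then 1 else 0) - if l.getLast? = some x then 1 else 0 := by
  induction l with
  | nil => simp [divergenceF, pathFlow, pathEdges]
  | cons a t ih =>
    rcases t with _ | ⟨b, t⟩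
    · simp [divergenceF, pathFlow, pathEdges]
    have hab : (a, b) ∉ pathEdges (b :: t) :=
      fun h => (List.nodup_cons.1 hl).1 (mem_of_mem_pathEdges h).1
    have hsplit : pathFlow (a :: b :: t) = Pi.single (a, b) 1 + pathFlow (b :: t) := by
      ext e
      by_cases he : e = (a, b)
      · subst he; simp [pathFlow_apply, hab]
      · simp [pathFlow_apply, he]
    rw [hsplit, divergenceF_add, divergenceF_single, ih (List.nodup_cons.1 hl).2,
      List.getLast?_cons_cons]
    simp only [List.head?_cons, Option.some.injEq]
    ring

end Divergence

section Acyclic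

variable {r s : V → V → Prop}

lemma AcyclicRel.mono (hs : AcyclicRel s) (h : ∀ a b, r a b → s a b) : AcyclicRel r :=
  fun x hx => hs x (TransGen.mono h x x hx)

lemma AcyclicRel.nodup (hr : AcyclicRel r) {l : List V} (hl : l.IsChain r) : l.Nodup := by
  have : l.IsChain (TransGen r) := hl.imp fun _ _ => TransGen.single
  refine (List.isChain_iff_pairwise.1 this).imp ?_
  rintro a _ hab rfl
  exact hr a hab

lemma AcyclicRel.exists_sink [Finite V] (hr : AcyclicRel r) (x : V) :
    ∃ y, ReflTransGen r x y ∧ ∀ z, ¬ r y z := by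
  have : IsTrans V (flip (TransGen r)) := ⟨fun _ _ _ hab hbc => hbc.trans hab⟩
  have : Std.Irrefl (flip (TransGen r)) := ⟨hr⟩
  obtain ⟨y, hxy, hmax⟩ := (Finite.wellFounded_of_trans_of_irrefl (flip (TransGen r))).has_min
    {y | ReflTransGen r x y} ⟨x, ReflTransGen.refl⟩
  exact ⟨y, hxy, fun z hyz => hmax z (hxy.tail hyz) (TransGen.single hyz)⟩

end Acyclic

section Flow

variable [Fintype V] {E : Set (V × V)} {Q : V × V → ℝ}

lemma divergenceF_neg_of_sink (hQ : ∀ e, 0 ≤ Q e) {w y : V} (hsink : ∀ z, ¬ 0 < Q (y, z))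
    (hin : 0 < Q (w, y)) : divergenceF Q y < 0 := by
  have hout : ∑ z, Q (y, z) = 0 :=
    sum_eq_zero fun z _ => le_antisymm (not_lt.1 (hsink z)) (hQ _)
  have : Q (w, y) ≤ ∑ z, Q (z, y) := single_le_sum (fun z _ => hQ (z, y)) (mem_univ w)
  rw [divergenceF, hout]
  linarith

lemma exists_pos_of_divergenceF_pos (hQ : ∀ e, 0 ≤ Q e) {x : V} (hx : 0 < divergenceF Q x) :
    ∃ z, 0 < Q (x, z) := by
  by_contra! h
  have : ∑ z, Q (x, z) ≤ 0 := sum_nonpos fun z _ => h z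
  have : 0 ≤ ∑ z, Q (z, x) := sum_nonneg fun z _ => hQ _
  rw [divergenceF] at hx
  linarith

lemma exists_divergenceF_neg (hQ : ∀ e, 0 ≤ Q e) (hacyc : AcyclicRel fun a b => 0 < Q (a, b))
    {a b : V} (hab : 0 < Q (a, b)) :
    ∃ y, TransGen (fun a b => 0 < Q (a, b)) a y ∧ divergenceF Q y < 0 := by
  obtain ⟨y, hby, hsink⟩ := hacyc.exists_sink b
  have hay := TransGen.head' (r := fun a b => 0 < Q (a, b)) hab hby
  obtain ⟨w, -, hwy⟩ := TransGen.tail'_iff.1 hay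
  exact ⟨y, hay, divergenceF_neg_of_sink hQ hsink hwy⟩

lemma eq_zero_of_forall_divergenceF_nonpos (hQ : ∀ e, 0 ≤ Q e)
    (hacyc : AcyclicRel fun a b => 0 < Q (a, b)) (h : ∀ x, divergenceF Q x ≤ 0) :
    Q = 0 := by
  have hdiv : ∀ x, divergenceF Q x = 0 := fun x =>
    (sum_eq_zero_iff_of_nonpos fun x _ => h x).1 (sum_divergenceF Q) x (mem_univ x)
  funext e
  by_contra hne
  obtain ⟨y, -, hy⟩ := exists_divergenceF_neg hQ hacyc ((hQ e).lt_of_ne' hne)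
  exact hy.ne (hdiv y)

lemma exists_path_of_divergenceF_pos (hQ : ∀ e, 0 ≤ Q e)
    (hacyc : AcyclicRel fun a b => 0 < Q (a, b)) {x : V} (hx : 0 < divergenceF Q x) :
    ∃ (l : List V) (y : V), l.IsChain (fun a b => 0 < Q (a, b)) ∧ l.head? = some x ∧
      l.getLast? = some y ∧ divergenceF Q y < 0 := by
  obtain ⟨z, hxz⟩ := exists_pos_of_divergenceF_pos hQ hx
  obtain ⟨y, hxy, hy⟩ := exists_divergenceF_neg hQ hacyc hxz
  obtain ⟨t, ht, hlast⟩ := List.exists_isChain_cons_of_relationReflTransGen hxy.to_reflTransGen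
  refine ⟨x :: t, y, ht, rfl, ?_, hy⟩
  rw [List.getLast?_eq_some_getLast (List.cons_ne_nil _ _), hlast]

end Flow

section Complexity

lemma card_filter_ne_zero_le {α M : Type*} [Fintype α] [Zero M] [DecidableEq M] {f g : α → M}
    (hgf : ∀ a, g a ≠ 0 → f a ≠ 0) : #{a | g a ≠ 0} ≤ #{a | f a ≠ 0} :=
  card_le_card fun a ha => by simp_all

lemma card_filter_ne_zero_lt {α M : Type*} [Fintype α] [Zero M] [DecidableEq M] {f g : α → M}
    (hgf : ∀ a, g a ≠ 0 → f a ≠ 0) {a : α} (hfa : f a ≠ 0) (hga : g a = 0) :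
    #{a | g a ≠ 0} < #{a | f a ≠ 0} :=
  card_lt_card ⟨fun b hb => by simp_all,
    fun h => by simpa [hga] using h (mem_filter.2 ⟨mem_univ a, hfa⟩)⟩

variable [Fintype V]

noncomputable def flowComplexity (Q : V × V → ℝ) : ℕ :=
  #{e | Q e ≠ 0} + #{x | divergenceF Q x ≠ 0}

lemma flowComplexity_lt {P Q : V × V → ℝ} (hPQ : ∀ e, P e ≠ 0 → Q e ≠ 0)
    (hdiv : ∀ x, divergenceF P x ≠ 0 → divergenceF Q x ≠ 0)
    (h : (∃ e, Q e ≠ 0 ∧ P e = 0) ∨ ∃ x, divergenceF Q x ≠ 0 ∧ divergenceF P x = 0) :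
    flowComplexity P < flowComplexity Q := by
  have hE := card_filter_ne_zero_le hPQ
  have hV := card_filter_ne_zero_le hdiv
  rcases h with ⟨e, hQe, hPe⟩ | ⟨x, hQx, hPx⟩
  · have := card_filter_ne_zero_lt hPQ hQe hPe
    unfold flowComplexity; omega
  · have := card_filter_ne_zero_lt hdiv hQx hPx
    unfold flowComplexity; omega

end Complexity

section Peeling

variable {E : Set (V × V)} {Q : V × V → ℝ} {l : List V} {c : ℝ}

lemma sub_smul_pathFlow_le (hc : 0 ≤ c) (e : V × V) : (Q - c • pathFlow l) e ≤ Q e := by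
  simpa using mul_nonneg hc (pathFlow_nonneg l e)

lemma sub_smul_pathFlow_nonneg (hQ : ∀ e, 0 ≤ Q e) (hcl : ∀ e ∈ pathEdges l, c ≤ Q e)
    (e : V × V) : 0 ≤ (Q - c • pathFlow l) e := by
  classical
  by_cases he : e ∈ pathEdges l <;> simp [pathFlow_apply, he, hcl, hQ]

lemma IsFlow.sub_smul_pathFlow (hQ : IsFlow E Q) (hc : 0 ≤ c)
    (hcl : ∀ e ∈ pathEdges l, c ≤ Q e) : IsFlow E (Q - c • pathFlow l) :=
  ⟨sub_smul_pathFlow_nonneg hQ.1 hcl, fun e he =>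
    le_antisymm (hQ.2 e he ▸ sub_smul_pathFlow_le hc e) (sub_smul_pathFlow_nonneg hQ.1 hcl e)⟩

lemma IsFlow.isDipath_of_isChain (hQ : IsFlow E Q) (hne : l ≠ [])
    (hl : l.IsChain fun a b => 0 < Q (a, b)) : IsDipath E l :=
  ⟨hne, hl.imp fun _ _ h => by_contra fun hE => h.ne' (hQ.2 _ hE)⟩


variable [Fintype V] [DecidableEq V] {x y : V}

lemma divergenceF_sub_smul_pathFlow (hnd : l.Nodup) (hx : l.head? = some x)
    (hy : l.getLast? = some y) (z : V) :
    divergenceF (Q - c • pathFlow l) z =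
      divergenceF Q z - c * ((if x = z then 1 else 0) - if y = z then 1 else 0) := by
  simp [divergenceF_pathFlow hnd, hx, hy]

lemma exists_peel_weight (hQ : ∀ e, 0 ≤ Q e) (hl : l.IsChain fun a b => 0 < Q (a, b))
    (hnd : l.Nodup) (hlx : l.head? = some x) (hly : l.getLast? = some y) (hxy : x ≠ y)
    (hx : 0 < divergenceF Q x) (hy : divergenceF Q y < 0) :
    ∃ c, 0 ≤ c ∧ c ≤ divergenceF Q x ∧ c ≤ -divergenceF Q y ∧ (∀ e ∈ pathEdges l, c ≤ Q e) ∧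
      flowComplexity (Q - c • pathFlow l) < flowComplexity Q := by
  obtain ⟨e₀, he₀, hmin⟩ := (pathEdges l).toFinset.exists_min_image Q
    (by simpa using pathEdges_ne_nil hlx hly hxy)
  rw [List.mem_toFinset] at he₀
  set c := min (Q e₀) (min (divergenceF Q x) (-divergenceF Q y))
  have hc : 0 < c := lt_min (hl.rel_of_mem_pathEdges he₀) (lt_min hx (neg_pos.2 hy))
  have hcl (e) (he : e ∈ pathEdges l) : c ≤ Q e :=
    (min_le_left _ _).trans (hmin e (List.mem_toFinset.2 he))
  have hdiv := divergenceF_sub_smul_pathFlow (Q := Q) (c := c) hnd hlx hly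
  refine ⟨c, hc.le, (min_le_right _ _).trans (min_le_left _ _),
    (min_le_right _ _).trans (min_le_right _ _), hcl, flowComplexity_lt (fun e he => ?_)
    (fun z hz => ?_) ?_⟩
  · exact (lt_of_lt_of_le ((sub_smul_pathFlow_nonneg hQ hcl e).lt_of_ne' he)
      (sub_smul_pathFlow_le hc.le e)).ne'
  · rintro h0
    have hzx : x ≠ z := by rintro rfl; exact hx.ne' h0
    have hzy : y ≠ z := by rintro rfl; exact hy.ne h0
    simp [hdiv, h0, hzx, hzy] at hz
  · rcases min_choice (Q e₀) (min (divergenceF Q x) (-divergenceF Q y)) with h | h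
    · exact Or.inl ⟨e₀, (hl.rel_of_mem_pathEdges he₀).ne', by
        simp [pathFlow_apply, he₀, c, h]⟩
    rcases min_choice (divergenceF Q x) (-divergenceF Q y) with h' | h'
    · exact Or.inr ⟨x, hx.ne', by rw [hdiv]; simp [hxy.symm, c, h, h']⟩
    · exact Or.inr ⟨y, hy.ne, by rw [hdiv]; simp [hxy, c, h, h']⟩

end Peeling

-- Bookkeeping at a vertex `z` when a path from `x` to `y` is peeled off: `a` is `x = z`, `b` is
-- `y = z`, and `d`, `d'` are the divergences at `z` before and after.
lemma ite_add_posPart_eq {a b : Prop} [Decidable a] [Decidable b] {c d d' : ℝ}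
    (hab : ¬(a ∧ b)) (hc : 0 ≤ c) (ha : a → c ≤ d) (hb : b → c ≤ -d)
    (hd' : d' = d - c * ((if a then 1 else 0) - if b then 1 else 0)) :
    (if a then c else 0) + d'⁺ = d⁺ := by
  subst hd'
  by_cases ha' : a <;> by_cases hb' : b
  · exact absurd ⟨ha', hb'⟩ hab
  · have := ha ha'
    simp [ha', hb', posPart_def, max_eq_left (sub_nonneg.2 this), max_eq_left (hc.trans this)]
  · have := hb hb'
    simp [ha', hb', posPart_def, max_eq_right (by linarith : d + c ≤ 0),
      max_eq_right (by linarith : d ≤ 0)]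
  · simp [ha', hb']

section Decomposition

variable [Fintype V] [DecidableEq V]

structure IsBalancedDecomposition (E : Set (V × V)) (Q : V × V → ℝ) (N : ℕ) (γ : ℕ → List V)
    (q : ℕ → ℝ) : Prop where
  isDipath : ∀ n, IsDipath E (γ n)
  nodup : ∀ n, (γ n).Nodup
  nonneg : ∀ n, 0 ≤ q n
  eq_zero : ∀ n, N ≤ n → q n = 0
  sum_pathFlow : ∀ e, ∑ n ∈ range N, q n * pathFlow (γ n) e = Q e
  sum_head : ∀ x, ∑ n ∈ range N, (if (γ n).head? = some x then q n else 0) = (divergenceF Q x)⁺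
  sum_getLast :
    ∀ x, ∑ n ∈ range N, (if (γ n).getLast? = some x then q n else 0) = (divergenceF Q x)⁻

variable {E : Set (V × V)} {Q : V × V → ℝ}

lemma IsBalancedDecomposition.zero (v : V) : IsBalancedDecomposition E 0 0 (fun _ => [v]) 0 where
  isDipath _ := ⟨List.cons_ne_nil _ _, List.isChain_singleton v⟩
  nodup _ := List.nodup_singleton v
  nonneg _ := le_rfl
  eq_zero _ _ := rfl
  sum_pathFlow _ := rfl
  sum_head _ := by simp [divergenceF]
  sum_getLast _ := by simp [divergenceF]

lemma IsBalancedDecomposition.cons {N : ℕ} {γ : ℕ → List V} {q : ℕ → ℝ} {l : List V}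
    {x y : V} {c : ℝ} (hd : IsBalancedDecomposition E (Q - c • pathFlow l) N γ q)
    (hl : IsDipath E l) (hnd : l.Nodup) (hx : l.head? = some x) (hy : l.getLast? = some y)
    (hxy : x ≠ y) (hc : 0 ≤ c) (hcx : c ≤ divergenceF Q x) (hcy : c ≤ -divergenceF Q y) :
    IsBalancedDecomposition E Q (N + 1) (fun | 0 => l | n + 1 => γ n)
      (fun | 0 => c | n + 1 => q n) := by
  have hdiv := divergenceF_sub_smul_pathFlow (Q := Q) (c := c) hnd hx hy
  refine ⟨fun n => ?_, fun n => ?_, fun n => ?_, fun n hn => ?_, fun e => ?_, fun z => ?_,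
    fun z => ?_⟩
  · cases n; exacts [hl, hd.isDipath _]
  · cases n; exacts [hnd, hd.nodup _]
  · cases n; exacts [hc, hd.nonneg _]
  · obtain ⟨n, rfl⟩ := Nat.exists_eq_add_of_lt hn
    exact hd.eq_zero _ (by omega)
  · simp [sum_range_succ', hd.sum_pathFlow]
  · rw [sum_range_succ', hd.sum_head, add_comm]
    simpa [hx] using ite_add_posPart_eq (a := x = z) (b := y = z)
      (by rintro ⟨rfl, rfl⟩; exact hxy rfl) hc (fun h => h ▸ hcx) (fun h => h ▸ hcy) (hdiv z)
  · have hneg : -divergenceF (Q - c • pathFlow l) z =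
        -divergenceF Q z - c * ((if y = z then 1 else 0) - if x = z then 1 else 0) := by
      rw [hdiv z]; ring
    rw [sum_range_succ', hd.sum_getLast, add_comm, ← posPart_neg, ← posPart_neg]
    simpa [hy] using ite_add_posPart_eq (a := y = z) (b := x = z)
      (by rintro ⟨rfl, rfl⟩; exact hxy rfl) hc (fun h => h ▸ hcy) (fun h => by rwa [neg_neg, ← h])
      hneg

variable [Nonempty V] in
theorem exists_isBalancedDecomposition (hQ : IsFlow E Q)
    (hacyc : AcyclicRel fun a b => 0 < Q (a, b)) :
    ∃ N γ q, IsBalancedDecomposition E Q N γ q := by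
  induction hn : flowComplexity Q using Nat.strong_induction_on generalizing Q with
  | _ n ih =>
  subst hn
  by_cases hsrc : ∃ x, 0 < divergenceF Q x
  swap
  · obtain rfl := eq_zero_of_forall_divergenceF_nonpos hQ.1 hacyc (by simpa using hsrc)
    exact ⟨0, _, _, IsBalancedDecomposition.zero (Classical.arbitrary V)⟩
  obtain ⟨x, hx⟩ := hsrc
  obtain ⟨l, y, hl, hlx, hly, hy⟩ := exists_path_of_divergenceF_pos hQ.1 hacyc hx
  have hxy : x ≠ y := by rintro rfl; linarith
  have hnd := hacyc.nodup hl
  obtain ⟨c, hc, hcx, hcy, hcl, hlt⟩ := exists_peel_weight hQ.1 hl hnd hlx hly hxy hx hy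
  obtain ⟨N, γ, q, hd⟩ := ih _ hlt (hQ.sub_smul_pathFlow hc hcl)
    (hacyc.mono fun a b h => h.trans_le (sub_smul_pathFlow_le hc _)) rfl
  refine ⟨N + 1, _, _, hd.cons ?_ hnd hlx hly hxy hc hcx hcy⟩
  exact hQ.isDipath_of_isChain (by rintro rfl; simp at hlx) hl

end Decomposition

section Endpoints

variable [Fintype V] [DecidableEq V] {γ : ℕ → List V} {q : ℕ → ℝ} {ends : List V → Option V}

lemma sum_sum_ite_endpoint_eq (s : Finset ℕ) (hends : ∀ n, ∃ x, ends (γ n) = some x) :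
    ∑ x, ∑ n ∈ s, (if ends (γ n) = some x then q n else 0) = ∑ n ∈ s, q n := by
  rw [sum_comm]
  refine sum_congr rfl fun n _ => ?_
  obtain ⟨x, hx⟩ := hends n
  simp [hx]

lemma sum_indicator_subset_le (hq : ∀ n, 0 ≤ q n) (s : Finset ℕ)
    (hends : ∀ n, ∃ x ∈ γ n, ends (γ n) = some x) (S : Set V) :
    ∑ n ∈ s, {m | ∀ v ∈ γ m, v ∈ S}.indicator q n ≤
      ∑ x, S.indicator (fun x => ∑ n ∈ s, if ends (γ n) = some x then q n else 0) x := by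
  classical
  calc _ ≤ ∑ n ∈ s, ∑ x, S.indicator (fun x => if ends (γ n) = some x then q n else 0) x :=
        sum_le_sum fun n _ => ?_
    _ = _ := by
      rw [sum_comm]
      refine sum_congr rfl fun x _ => ?_
      by_cases hx : x ∈ S <;> simp [hx]
  obtain ⟨x, hx, hend⟩ := hends n
  have hnn (y : V) : 0 ≤ S.indicator (fun x => if ends (γ n) = some x then q n else 0) y :=
    Set.indicator_nonneg (fun _ _ => by split_ifs <;> simp [hq n]) y
  by_cases hS : ∀ v ∈ γ n, v ∈ S
  · calc {m | ∀ v ∈ γ m, v ∈ S}.indicator q n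
        = S.indicator (fun y => if ends (γ n) = some y then q n else 0) x := by
          simp [Set.indicator_of_mem (show n ∈ {m | ∀ v ∈ γ m, v ∈ S} from hS), hend, hS x hx]
      _ ≤ _ := single_le_sum (fun y _ => hnn y) (mem_univ x)
  · rw [Set.indicator_of_notMem (show n ∉ {m | ∀ v ∈ γ m, v ∈ S} from hS)]
    exact sum_nonneg fun y _ => hnn y

end Endpoints

namespace IsBalancedDecomposition

variable [Fintype V] [DecidableEq V] {E : Set (V × V)} {Q : V × V → ℝ} {N : ℕ}
  {γ : ℕ → List V} {q : ℕ → ℝ}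

lemma tsum_eq_sum (hd : IsBalancedDecomposition E Q N γ q) {f : ℕ → ℝ}
    (hf : ∀ n, q n = 0 → f n = 0) : ∑' n, f n = ∑ n ∈ range N, f n :=
  _root_.tsum_eq_sum fun n hn => hf n (hd.eq_zero n (by simpa using hn))

lemma summable (hd : IsBalancedDecomposition E Q N γ q) : Summable q :=
  summable_of_ne_finset_zero (s := range N) fun n hn => hd.eq_zero n (by simpa using hn)

lemma tsum_pathFlow (hd : IsBalancedDecomposition E Q N γ q) (e : V × V) :
    Q e = ∑' n, q n * pathFlow (γ n) e := by
  rw [hd.tsum_eq_sum fun n hn => by rw [hn, zero_mul], hd.sum_pathFlow]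

lemma exists_mem_head (hd : IsBalancedDecomposition E Q N γ q) (n : ℕ) :
    ∃ x ∈ γ n, (γ n).head? = some x :=
  ⟨_, List.head_mem (hd.isDipath n).1, List.head?_eq_some_head (hd.isDipath n).1⟩

lemma exists_mem_getLast (hd : IsBalancedDecomposition E Q N γ q) (n : ℕ) :
    ∃ x ∈ γ n, (γ n).getLast? = some x :=
  ⟨_, List.getLast_mem (hd.isDipath n).1, List.getLast?_eq_some_getLast (hd.isDipath n).1⟩

lemma tsum_eq_sum_posPart (hd : IsBalancedDecomposition E Q N γ q) :
    ∑' n, q n = ∑ x, (divergenceF Q x)⁺ := by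
  rw [hd.tsum_eq_sum fun _ => id, ← sum_sum_ite_endpoint_eq _ fun n =>
    (hd.exists_mem_head n).imp fun _ => And.right]
  exact sum_congr rfl fun x _ => hd.sum_head x

lemma tsum_indicator_le_posPart (hd : IsBalancedDecomposition E Q N γ q) (S : Set V) :
    ∑' n, {m | ∀ v ∈ γ m, v ∈ S}.indicator q n ≤
      ∑ x, S.indicator (fun x => (divergenceF Q x)⁺) x := by
  rw [hd.tsum_eq_sum fun n hn => by simp [hn]]
  simpa only [hd.sum_head] using sum_indicator_subset_le hd.nonneg (range N) hd.exists_mem_head S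

lemma tsum_indicator_le_negPart (hd : IsBalancedDecomposition E Q N γ q) (S : Set V) :
    ∑' n, {m | ∀ v ∈ γ m, v ∈ S}.indicator q n ≤
      ∑ x, S.indicator (fun x => (divergenceF Q x)⁻) x := by
  rw [hd.tsum_eq_sum fun n hn => by simp [hn]]
  simpa only [hd.sum_getLast] using
    sum_indicator_subset_le hd.nonneg (range N) hd.exists_mem_getLast S

end IsBalancedDecomposition

lemma sum_posPart_eq_half_sum_abs {ι : Type*} [Fintype ι] (f : ι → ℝ) (hf : ∑ i, f i = 0) :
    ∑ i, (f i)⁺ = 1 / 2 * ∑ i, |f i| := by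
  have h := sum_congr rfl fun i (_ : i ∈ univ) => add_abs_eq_two_nsmul_posPart (f i)
  simp only [sum_add_distrib, hf, nsmul_eq_mul, ← mul_sum, Nat.cast_ofNat] at h
  linarith

lemma Set.indicator_inter_lt_sub (S : Set V) (a b : V → ℝ) (x : V) :
    (S ∩ {x | b x < a x}).indicator (fun x => a x - b x) x =
      S.indicator (fun x => (a x - b x)⁺) x := by
  by_cases hS : x ∈ S <;> by_cases hab : b x < a x
  · simp [hS, hab, posPart_def, hab.le]
  · simp [hS, hab, posPart_def, not_lt.1 hab]
  all_goals simp [hS]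

theorem acyclic_flow_balanced_decomposition_general {V : Type*} [Fintype V]
    (E : Set (V × V))
    (Q : V × V → ℝ) (hQ : IsFlow E Q)
    (hacyc : AcyclicRel fun a b => 0 < Q (a, b))
    (μ₁ μ₂ : V → ℝ) (h₁ : IsProbF μ₁)
    (hdiv : ∀ x, divergenceF Q x = μ₁ x - μ₂ x) :
    ∃ (γ : ℕ → List V) (q : ℕ → ℝ),
      (∀ n, IsDipath E (γ n)) ∧ (∀ n, (γ n).Nodup) ∧ (∀ n, 0 ≤ q n) ∧ Summable q ∧
      (∀ e, Q e = ∑' n, q n * pathFlow (γ n) e) ∧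
      (∀ S : Set V,
        (∑' n, Set.indicator {m : ℕ | ∀ v ∈ γ m, v ∈ S} q n) ≤
          min (∑ x, Set.indicator (S ∩ {x | μ₂ x < μ₁ x}) (fun x => μ₁ x - μ₂ x) x)
            (∑ x, Set.indicator (S ∩ {x | μ₁ x < μ₂ x}) (fun x => μ₂ x - μ₁ x) x)) ∧
      (∑' n, q n) = (1 / 2) * ∑ x, |μ₁ x - μ₂ x| := by
  classical
  have : Nonempty V := univ_nonempty_iff.1 (nonempty_of_sum_ne_zero (h₁.2 ▸ one_ne_zero))
  obtain ⟨N, γ, q, hd⟩ := exists_isBalancedDecomposition hQ hacyc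
  refine ⟨γ, q, hd.isDipath, hd.nodup, hd.nonneg, hd.summable, hd.tsum_pathFlow,
    fun S => le_min ?_ ?_, ?_⟩
  · simpa only [Set.indicator_inter_lt_sub, hdiv] using hd.tsum_indicator_le_posPart S
  · simpa only [Set.indicator_inter_lt_sub, ← posPart_neg, hdiv, neg_sub]
      using hd.tsum_indicator_le_negPart S
  · rw [hd.tsum_eq_sum_posPart, sum_posPart_eq_half_sum_abs _ (sum_divergenceF Q)]
    simp only [hdiv]

/-- **Well-balanced decomposition of finite acyclic flows.**
Any acyclic flow `Q` on a finite digraph with `div Q = μ₁ - μ₂` admits a decomposition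
`Q = ∑ₙ qₙ Q_{γₙ}` whose mass inside any set `S` is bounded by the positive and negative
parts of `μ₁ - μ₂` inside `S`, and with total mass `½ ∑ₓ |μ₁(x) - μ₂(x)|`. -/
theorem acyclic_flow_balanced_decomposition {V : Type*} [Fintype V]
    (E : Set (V × V)) (hloop : ∀ x : V, (x, x) ∉ E)
    (Q : V × V → ℝ) (hQ : IsFlow E Q)
    (hacyc : AcyclicRel fun a b => 0 < Q (a, b))
    (μ₁ μ₂ : V → ℝ) (h₁ : IsProbF μ₁) (h₂ : IsProbF μ₂)
    (hdiv : ∀ x, divergenceF Q x = μ₁ x - μ₂ x) :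
    ∃ (γ : ℕ → List V) (q : ℕ → ℝ),
      (∀ n, IsDipath E (γ n)) ∧ (∀ n, (γ n).Nodup) ∧ (∀ n, 0 ≤ q n) ∧ Summable q ∧
      (∀ e, Q e = ∑' n, q n * pathFlow (γ n) e) ∧
      (∀ S : Set V,
        (∑' n, Set.indicator {m : ℕ | ∀ v ∈ γ m, v ∈ S} q n) ≤
          min (∑ x, Set.indicator (S ∩ {x | μ₂ x < μ₁ x}) (fun x => μ₁ x - μ₂ x) x)
            (∑ x, Set.indicator (S ∩ {x | μ₁ x < μ₂ x}) (fun x => μ₂ x - μ₁ x) x)) ∧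
      (∑' n, q n) = (1 / 2) * ∑ x, |μ₁ x - μ₂ x| :=
  acyclic_flow_balanced_decomposition_general E Q hQ hacyc μ₁ μ₂ h₁ hdiv
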